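/- Let B_0 = { [[a,b],[0,d]] ∈ SL_*(2,A_m) } be the set of upper triangular matrices in SL_*(2,A_m). Then B_0 is a subgroup of SL_*(2,A_m) and SL_*(2,A_m) = B_0 ∪ B_0 w B_0 ∪ B_0 w B_0 w B_0, where w = [[0,1],[−1,0]]; in particular SL_*(2,A_m) is generated by the Bruhat generators h(t) (t ∈ A_m^×), u(b) (b ∈ A_m^s) and w, and has Bruhat (w-)length 2. -/

import Mathlib

open Polynomial

set_option synthInstance.maxHeartbeats 1000000

/-- The truncated polynomial algebra `A_m = k[x]/⟨x^m⟩`. -/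
abbrev TruncPoly (k : Type*) [Field k] (m : ℕ) :=
  Polynomial k ⧸ Ideal.span {(Polynomial.X : Polynomial k) ^ m}

/-- The class of `x` in `A_m = k[x]/⟨x^m⟩`. -/
noncomputable def xbar (k : Type*) [Field k] (m : ℕ) : TruncPoly k m :=
  Ideal.Quotient.mk _ (Polynomial.X : Polynomial k)

/-- The set `SL_*(2,A)` for a commutative ring `A` equipped with an involution `σ`. -/
def SLstarSet {A : Type*} [CommRing A] (σ : A → A) : Set (Matrix (Fin 2) (Fin 2) A) :=
  {g | g 0 0 * σ (g 0 1) = g 0 1 * σ (g 0 0) ∧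
       g 1 0 * σ (g 1 1) = g 1 1 * σ (g 1 0) ∧
       σ (g 0 0) * g 1 0 = σ (g 1 0) * g 0 0 ∧
       σ (g 0 1) * g 1 1 = σ (g 1 1) * g 0 1 ∧
       g 0 0 * σ (g 1 1) - g 0 1 * σ (g 1 0) = 1 ∧
       σ (g 0 0) * g 1 1 - σ (g 1 0) * g 0 1 = 1}

/-- The Bruhat generator `h(t) = [[t, 0],[0, (t*)⁻¹]]`. -/
def hM {A : Type*} [CommRing A] (σ : A →* A) (t : Aˣ) : Matrix (Fin 2) (Fin 2) A :=
  !![(t : A), 0; 0, ((Units.map σ t)⁻¹ : Aˣ)]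

/-- The Bruhat generator `u(s) = [[1, s],[0, 1]]`. -/
def uM {A : Type*} [CommRing A] (s : A) : Matrix (Fin 2) (Fin 2) A :=
  !![1, s; 0, 1]

/-- The Bruhat generator `w = [[0, 1],[−1, 0]]`. -/
def wM (A : Type*) [CommRing A] : Matrix (Fin 2) (Fin 2) A :=
  !![0, 1; -1, 0]

/-!
Write `g† = (g*)ᵀ`. The six defining relations of `SL_*(2,A)` say exactly that
`g w g† = w = g† w g`, so `SL_*(2,A)` is closed under products and under `†`, contains `w`,
and `g⁻¹ = w† g† w`. In a local ring the relation `a*d − c*b = 1` forces `a` or `c` to be a unit.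
If `c` is a unit, `g u(−c⁻¹d) w⁻¹` is upper triangular, so `g ∈ B₀wB₀`; if `a` is a unit,
`w u(a⁻¹c) w g` is upper triangular, so `g ∈ B₀wB₀wB₀`. An upper triangular element of
`SL_*(2,A)` is `h(t) u(s)`, which gives generation. Finally `A_m` is local for `m > 0`, since each
of its elements is a unit or nilpotent, and `x* = ±x` makes `*` an involution.
-/

namespace TruncPoly

variable {k : Type*} [Field k] {m : ℕ}

theorem isNilpotent_xbar : IsNilpotent (xbar k m) :=
  ⟨m, by
    rw [xbar, ← map_pow, Ideal.Quotient.eq_zero_iff_mem]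
    exact Ideal.mem_span_singleton_self _⟩

theorem isUnit_or_isNilpotent (a : TruncPoly k m) : IsUnit a ∨ IsNilpotent a := by
  obtain ⟨p, rfl⟩ := Ideal.Quotient.mk_surjective a
  have hdecomp : Ideal.Quotient.mk _ p =
      xbar k m * Ideal.Quotient.mk _ p.divX + algebraMap k (TruncPoly k m) (p.coeff 0) := by
    conv_lhs => rw [← p.X_mul_divX_add]
    rfl
  have hnil : IsNilpotent (xbar k m * Ideal.Quotient.mk _ p.divX) :=
    (Commute.all _ _).isNilpotent_mul_right isNilpotent_xbar
  rw [hdecomp]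
  by_cases h0 : p.coeff 0 = 0
  · right; simpa [h0] using hnil
  · left
    have hc : IsUnit (algebraMap k (TruncPoly k m) (p.coeff 0)) :=
      (isUnit_iff_ne_zero.2 h0).map _
    exact hnil.isUnit_add_right_of_commute hc (.all _ _)

theorem isLocalRing (hm : 0 < m) : IsLocalRing (TruncPoly k m) := by
  have : Nontrivial (TruncPoly k m) := by
    refine Ideal.Quotient.nontrivial_iff.mpr ?_
    rw [Ne, Ideal.span_singleton_eq_top, isUnit_iff_degree_eq_zero, degree_X_pow]
    exact_mod_cast hm.ne'
  refine .of_isUnit_or_isUnit_one_sub_self fun a => (isUnit_or_isNilpotent a).imp_right ?_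
  exact IsNilpotent.isUnit_one_sub

theorem involutive_of_map_xbar (σ : TruncPoly k m →ₐ[k] TruncPoly k m)
    (hσ : σ (xbar k m) = xbar k m ∨ σ (xbar k m) = -xbar k m) : Function.Involutive σ := by
  have h : σ.comp σ = AlgHom.id k (TruncPoly k m) := by
    apply Ideal.Quotient.algHom_ext
    apply Polynomial.algHom_ext
    change σ (σ (xbar k m)) = xbar k m
    rcases hσ with h | h <;> simp [h]
  exact AlgHom.congr_fun h

end TruncPoly

open scoped Matrix

section SLstar

variable {A : Type*} {F : Type*} [FunLike F A A] {σ : F}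

def starTranspose (σ : F) {m n : Type*} (g : Matrix m n A) : Matrix n m A := (g.map σ)ᵀ

theorem starTranspose_starTranspose (hσ : Function.Involutive σ) {m n : Type*}
    (g : Matrix m n A) : starTranspose σ (starTranspose σ g) = g := by
  ext; simp [starTranspose, hσ _]

variable [CommRing A] [RingHomClass F A A]

theorem starTranspose_mul {n : Type*} [Fintype n] (g h : Matrix n n A) :
    starTranspose σ (g * h) = starTranspose σ h * starTranspose σ g := by
  simp [starTranspose, Matrix.transpose_mul]

theorem starTranspose_wM : starTranspose σ (wM A) = -wM A := by
  ext i j; fin_cases i <;> fin_cases j <;> simp [starTranspose, wM]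

theorem wM_mul_wM : wM A * wM A = -1 := by
  ext i j; fin_cases i <;> fin_cases j <;> simp [wM]

theorem uM_add (s t : A) : uM (s + t) = uM s * uM t := by
  ext i j; fin_cases i <;> fin_cases j <;> simp [uM, add_comm]

theorem uM_zero : uM (0 : A) = 1 := by
  ext i j; fin_cases i <;> fin_cases j <;> simp [uM]

theorem mem_SLstarSet_iff (hσ : Function.Involutive σ) {g : Matrix (Fin 2) (Fin 2) A} :
    g ∈ SLstarSet σ ↔
      g * wM A * starTranspose σ g = wM A ∧ starTranspose σ g * wM A * g = wM A := by
  have hσ' (a : A) : σ (σ a) = a := hσ a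
  simp only [SLstarSet, Set.mem_ofPred_eq, ← Matrix.ext_iff, Fin.forall_fin_two]
  simp only [wM, starTranspose, Matrix.mul_apply, Matrix.of_apply, Matrix.cons_val',
    Matrix.cons_val_fin_one, Fin.sum_univ_two, Matrix.cons_val_zero, Matrix.cons_val_one,
    Matrix.transpose_apply, Matrix.map_apply, mul_zero, mul_neg, mul_one, zero_add, neg_mul,
    add_zero]
  -- the `(1,0)` entries of both equations are the `σ`-images of the `(0,1)` entries
  constructor
  · rintro ⟨h1, h2, h3, h4, h5, h6⟩
    have h5' := congrArg σ h5
    have h6' := congrArg σ h6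
    simp only [map_sub, map_mul, map_one, hσ'] at h5' h6'
    exact ⟨⟨⟨by linear_combination h1, by linear_combination h5⟩, by linear_combination -h5',
      by linear_combination h2⟩, ⟨by linear_combination h3, by linear_combination h6⟩,
      by linear_combination -h6', by linear_combination h4⟩
  · rintro ⟨⟨⟨e1, e5⟩, -, e2⟩, ⟨e3, e6⟩, -, e4⟩
    exact ⟨by linear_combination e1, by linear_combination e2, by linear_combination e3,
      by linear_combination e4, by linear_combination e5, by linear_combination e6⟩

theorem one_mem_SLstarSet (hσ : Function.Involutive σ) : 1 ∈ SLstarSet σ := by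
  simp [mem_SLstarSet_iff hσ, starTranspose]

theorem mul_mem_SLstarSet (hσ : Function.Involutive σ) {g h : Matrix (Fin 2) (Fin 2) A}
    (hg : g ∈ SLstarSet σ) (hh : h ∈ SLstarSet σ) : g * h ∈ SLstarSet σ := by
  rw [mem_SLstarSet_iff hσ] at *
  rw [starTranspose_mul]
  constructor
  · calc g * h * wM A * (starTranspose σ h * starTranspose σ g)
        = g * (h * wM A * starTranspose σ h) * starTranspose σ g := by
          simp only [Matrix.mul_assoc]
      _ = wM A := by rw [hh.1, hg.1]
  · calc starTranspose σ h * starTranspose σ g * wM A * (g * h)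
        = starTranspose σ h * (starTranspose σ g * wM A * g) * h := by
          simp only [Matrix.mul_assoc]
      _ = wM A := by rw [hg.2, hh.2]

theorem starTranspose_mem_SLstarSet (hσ : Function.Involutive σ) {g : Matrix (Fin 2) (Fin 2) A}
    (hg : g ∈ SLstarSet σ) : starTranspose σ g ∈ SLstarSet σ := by
  rw [mem_SLstarSet_iff hσ] at *
  rw [starTranspose_starTranspose hσ]
  exact hg.symm

theorem wM_mem_SLstarSet (hσ : Function.Involutive σ) : wM A ∈ SLstarSet σ := by
  simp [mem_SLstarSet_iff hσ, starTranspose_wM, wM_mul_wM]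

theorem uM_mem_SLstarSet {s : A} (hs : σ s = s) : uM s ∈ SLstarSet σ := by
  simp [SLstarSet, uM, hs]

theorem map_inv_mul_eq_self (u : Aˣ) {y : A} (h : u * σ y = y * σ u) :
    σ (↑u⁻¹ * y) = ↑u⁻¹ * y := by
  have hσu : σ u * σ ↑u⁻¹ = 1 := by rw [← map_mul, Units.mul_inv, map_one]
  rw [map_mul]
  linear_combination (↑u⁻¹ * σ ↑u⁻¹) * h - (σ ↑u⁻¹ * σ y) * u.mul_inv + (↑u⁻¹ * y) * hσu

def SLstarBorel (σ : F) : Set (Matrix (Fin 2) (Fin 2) A) := {g ∈ SLstarSet σ | g 1 0 = 0}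

theorem one_mem_SLstarBorel (hσ : Function.Involutive σ) : 1 ∈ SLstarBorel σ :=
  ⟨one_mem_SLstarSet hσ, rfl⟩

theorem mul_mem_SLstarBorel (hσ : Function.Involutive σ) {g h : Matrix (Fin 2) (Fin 2) A}
    (hg : g ∈ SLstarBorel σ) (hh : h ∈ SLstarBorel σ) : g * h ∈ SLstarBorel σ :=
  ⟨mul_mem_SLstarSet hσ hg.1 hh.1, by simp [Matrix.mul_apply, hg.2, hh.2]⟩

theorem exists_inverse_mem_SLstarBorel (hσ : Function.Involutive σ)
    {g : Matrix (Fin 2) (Fin 2) A} (hg : g ∈ SLstarBorel σ) :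
    ∃ g' ∈ SLstarBorel σ, g * g' = 1 ∧ g' * g = 1 := by
  have ⟨hw, hw'⟩ := (mem_SLstarSet_iff hσ).1 hg.1
  refine ⟨starTranspose σ (wM A) * starTranspose σ g * wM A, ⟨?_, ?_⟩, ?_, ?_⟩
  · exact mul_mem_SLstarSet hσ (mul_mem_SLstarSet hσ
      (starTranspose_mem_SLstarSet hσ (wM_mem_SLstarSet hσ)) (starTranspose_mem_SLstarSet hσ hg.1))
      (wM_mem_SLstarSet hσ)
  · simp [starTranspose, wM, Matrix.mul_apply, hg.2]
  · calc g * (starTranspose σ (wM A) * starTranspose σ g * wM A)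
        = -(g * wM A * starTranspose σ g * wM A) := by
          simp only [starTranspose_wM, Matrix.neg_mul, Matrix.mul_neg, Matrix.mul_assoc]
      _ = 1 := by rw [hw, wM_mul_wM, neg_neg]
  · calc starTranspose σ (wM A) * starTranspose σ g * wM A * g
        = -(wM A * (starTranspose σ g * wM A * g)) := by
          simp only [starTranspose_wM, Matrix.neg_mul, Matrix.mul_assoc]
      _ = 1 := by rw [hw', wM_mul_wM, neg_neg]

theorem uM_mem_SLstarBorel {s : A} (hs : σ s = s) : uM s ∈ SLstarBorel σ :=
  ⟨uM_mem_SLstarSet hs, rfl⟩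

theorem exists_eq_hM_mul_uM_of_mem_SLstarBorel (hσ : Function.Involutive σ)
    {g : Matrix (Fin 2) (Fin 2) A} (hg : g ∈ SLstarBorel σ) :
    ∃ t : Aˣ, ∃ s : A, σ s = s ∧ g = hM (σ : A →* A) t * uM s := by
  obtain ⟨⟨-, -, -, h4, h5, -⟩, hc⟩ := hg
  simp only [hc, map_zero, mul_zero, sub_zero] at h5
  refine ⟨⟨g 0 0, σ (g 1 1), h5, by rw [mul_comm, h5]⟩, σ (g 1 1) * g 0 1, ?_, ?_⟩
  · rw [map_mul, hσ, mul_comm, h4]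
  · ext i j
    fin_cases i <;> fin_cases j <;> simp [hM, uM, hσ _, hc]
    linear_combination -g 0 1 * h5

theorem exists_eq_mul_wM_mul_of_isUnit (hσ : Function.Involutive σ)
    {g : Matrix (Fin 2) (Fin 2) A} (hg : g ∈ SLstarSet σ) (hc : IsUnit (g 1 0)) :
    ∃ b₁ ∈ SLstarBorel σ, ∃ b₂ ∈ SLstarBorel σ, g = b₁ * wM A * b₂ := by
  obtain ⟨u, hu⟩ := hc
  have hs : σ (↑u⁻¹ * g 1 1) = ↑u⁻¹ * g 1 1 := map_inv_mul_eq_self u (hu ▸ hg.2.1)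
  have hs' : σ (-(↑u⁻¹ * g 1 1)) = -(↑u⁻¹ * g 1 1) := by rw [map_neg, hs]
  refine ⟨g * uM (-(↑u⁻¹ * g 1 1)) * starTranspose σ (wM A), ⟨?_, ?_⟩,
    uM (↑u⁻¹ * g 1 1), uM_mem_SLstarBorel hs, ?_⟩
  · exact mul_mem_SLstarSet hσ (mul_mem_SLstarSet hσ hg (uM_mem_SLstarSet hs'))
      (starTranspose_mem_SLstarSet hσ (wM_mem_SLstarSet hσ))
  · simp [starTranspose, wM, uM, Matrix.mul_apply, ← hu]
  · rw [starTranspose_wM, Matrix.mul_assoc _ (-wM A), Matrix.neg_mul, wM_mul_wM, neg_neg,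
      Matrix.mul_one, Matrix.mul_assoc, ← uM_add, neg_add_cancel, uM_zero, Matrix.mul_one]

theorem exists_eq_mul_wM_mul_wM_mul_of_isUnit (hσ : Function.Involutive σ)
    {g : Matrix (Fin 2) (Fin 2) A} (hg : g ∈ SLstarSet σ) (ha : IsUnit (g 0 0)) :
    ∃ b₁ ∈ SLstarBorel σ, ∃ b₂ ∈ SLstarBorel σ, ∃ b₃ ∈ SLstarBorel σ,
      g = b₁ * wM A * b₂ * wM A * b₃ := by
  obtain ⟨u, hu⟩ := ha
  have ht : σ (↑u⁻¹ * g 1 0) = ↑u⁻¹ * g 1 0 :=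
    map_inv_mul_eq_self u (by rw [hu]; linear_combination -hg.2.2.1)
  have ht' : σ (-(↑u⁻¹ * g 1 0)) = -(↑u⁻¹ * g 1 0) := by rw [map_neg, ht]
  refine ⟨1, one_mem_SLstarBorel hσ, uM (-(↑u⁻¹ * g 1 0)), uM_mem_SLstarBorel ht',
    wM A * uM (↑u⁻¹ * g 1 0) * wM A * g, ⟨?_, ?_⟩, ?_⟩
  · exact mul_mem_SLstarSet hσ (mul_mem_SLstarSet hσ (mul_mem_SLstarSet hσ
      (wM_mem_SLstarSet hσ) (uM_mem_SLstarSet ht)) (wM_mem_SLstarSet hσ)) hg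
  · simp [wM, uM, Matrix.mul_apply, ← hu]
    linear_combination g 1 0 * u.inv_mul
  · simp only [Matrix.one_mul, Matrix.mul_assoc]
    rw [← Matrix.mul_assoc (wM A) (wM A), wM_mul_wM, Matrix.neg_mul, Matrix.one_mul,
      Matrix.mul_neg, ← Matrix.mul_assoc (uM _), ← uM_add, neg_add_cancel, uM_zero, Matrix.one_mul,
      Matrix.mul_neg, ← Matrix.mul_assoc, wM_mul_wM, Matrix.neg_mul, neg_neg, Matrix.one_mul]

theorem isUnit_or_isUnit_of_mem_SLstarSet [IsLocalRing A] (hσ : Function.Involutive σ)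
    {g : Matrix (Fin 2) (Fin 2) A} (hg : g ∈ SLstarSet σ) : IsUnit (g 0 0) ∨ IsUnit (g 1 0) := by
  have hdet : σ (g 0 0) * g 1 1 + σ (g 1 0) * -g 0 1 = 1 := by
    linear_combination hg.2.2.2.2.2
  have isUnit_of_map (a : A) (h : IsUnit (σ a)) : IsUnit a := hσ a ▸ h.map σ
  exact (IsLocalRing.isUnit_or_isUnit_of_add_one hdet).imp
    (fun h => isUnit_of_map _ (isUnit_of_mul_isUnit_left h))
    (fun h => isUnit_of_map _ (isUnit_of_mul_isUnit_left h))

def bruhatGenerators (σ : F) : Set (Matrix (Fin 2) (Fin 2) A) :=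
  {g | ∃ s : A, σ s = s ∧ g = uM s} ∪ {g | ∃ t : Aˣ, g = hM (σ : A →* A) t} ∪ {wM A}

theorem SLstarBorel_subset_closure_bruhatGenerators (hσ : Function.Involutive σ) :
    SLstarBorel σ ⊆ Submonoid.closure (bruhatGenerators σ) := by
  intro g hg
  obtain ⟨t, s, hs, rfl⟩ := exists_eq_hM_mul_uM_of_mem_SLstarBorel hσ hg
  exact mul_mem (Submonoid.subset_closure (.inl (.inr ⟨t, rfl⟩)))
    (Submonoid.subset_closure (.inl (.inl ⟨s, hs, rfl⟩)))

theorem SLstarSet_subset_closure_bruhatGenerators [IsLocalRing A] (hσ : Function.Involutive σ) :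
    SLstarSet σ ⊆ Submonoid.closure (bruhatGenerators σ) := by
  have hB := SLstarBorel_subset_closure_bruhatGenerators hσ
  have hw : wM A ∈ Submonoid.closure (bruhatGenerators σ) := Submonoid.subset_closure (.inr rfl)
  intro g hg
  rcases isUnit_or_isUnit_of_mem_SLstarSet hσ hg with ha | hc
  · obtain ⟨b₁, hb₁, b₂, hb₂, b₃, hb₃, rfl⟩ := exists_eq_mul_wM_mul_wM_mul_of_isUnit hσ hg ha
    exact mul_mem (mul_mem (mul_mem (mul_mem (hB hb₁) hw) (hB hb₂)) hw) (hB hb₃)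
  · obtain ⟨b₁, hb₁, b₂, hb₂, rfl⟩ := exists_eq_mul_wM_mul_of_isUnit hσ hg hc
    exact mul_mem (mul_mem (hB hb₁) hw) (hB hb₂)

end SLstar

theorem SLstar_truncPoly_bruhat_decomposition_general
    {k : Type*} [Field k]
    {m : ℕ} (hm : 0 < m)
    (σ : TruncPoly k m →ₐ[k] TruncPoly k m)
    (hσ : σ (xbar k m) = xbar k m ∨ σ (xbar k m) = -xbar k m) :
    (1 : Matrix (Fin 2) (Fin 2) (TruncPoly k m)) ∈
        {g ∈ SLstarSet (⇑σ) | g 1 0 = 0} ∧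
    (∀ g ∈ {g ∈ SLstarSet (⇑σ) | g 1 0 = 0}, ∀ h ∈ {g ∈ SLstarSet (⇑σ) | g 1 0 = 0},
      g * h ∈ {g ∈ SLstarSet (⇑σ) | g 1 0 = 0}) ∧
    (∀ g ∈ {g ∈ SLstarSet (⇑σ) | g 1 0 = 0},
      ∃ g' ∈ {g ∈ SLstarSet (⇑σ) | g 1 0 = 0}, g * g' = 1 ∧ g' * g = 1) ∧
    (∀ g ∈ SLstarSet (⇑σ),
      g ∈ {g ∈ SLstarSet (⇑σ) | g 1 0 = 0} ∨
      (∃ b₁ ∈ {g ∈ SLstarSet (⇑σ) | g 1 0 = 0}, ∃ b₂ ∈ {g ∈ SLstarSet (⇑σ) | g 1 0 = 0},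
        g = b₁ * wM (TruncPoly k m) * b₂) ∨
      (∃ b₁ ∈ {g ∈ SLstarSet (⇑σ) | g 1 0 = 0}, ∃ b₂ ∈ {g ∈ SLstarSet (⇑σ) | g 1 0 = 0},
        ∃ b₃ ∈ {g ∈ SLstarSet (⇑σ) | g 1 0 = 0},
        g = b₁ * wM (TruncPoly k m) * b₂ * wM (TruncPoly k m) * b₃)) ∧
    (SLstarSet (⇑σ) ⊆ Submonoid.closure
      ({g | ∃ s : TruncPoly k m, σ s = s ∧ g = uM s} ∪
       {g | ∃ t : (TruncPoly k m)ˣ, g = hM (σ : TruncPoly k m →* TruncPoly k m) t} ∪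
       {wM (TruncPoly k m)})) := by
  have := TruncPoly.isLocalRing (k := k) hm
  have hinv := TruncPoly.involutive_of_map_xbar σ hσ
  refine ⟨one_mem_SLstarBorel hinv, fun g hg h hh => mul_mem_SLstarBorel hinv hg hh,
    fun g hg => exists_inverse_mem_SLstarBorel hinv hg, fun g hg => ?_,
    SLstarSet_subset_closure_bruhatGenerators hinv⟩
  rcases isUnit_or_isUnit_of_mem_SLstarSet hinv hg with ha | hc
  · exact .inr (.inr (exists_eq_mul_wM_mul_wM_mul_of_isUnit hinv hg ha))
  · exact .inr (.inl (exists_eq_mul_wM_mul_of_isUnit hinv hg hc))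

/-- The set `B₀` of upper triangular matrices in `SL_*(2,A_m)` is a
subgroup, `SL_*(2,A_m) = B₀ ∪ B₀wB₀ ∪ B₀wB₀wB₀`; in particular `SL_*(2,A_m)` is
generated by the Bruhat generators and has Bruhat (`w`-)length `2`. -/
theorem SLstar_truncPoly_bruhat_decomposition
    {k : Type*} [Field k] [Fintype k] (hodd : Odd (Fintype.card k))
    {m : ℕ} (hm : 0 < m)
    (σ : TruncPoly k m →ₐ[k] TruncPoly k m)
    (hσ : σ (xbar k m) = xbar k m ∨ σ (xbar k m) = -xbar k m) :
    (1 : Matrix (Fin 2) (Fin 2) (TruncPoly k m)) ∈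
        {g ∈ SLstarSet (⇑σ) | g 1 0 = 0} ∧
    (∀ g ∈ {g ∈ SLstarSet (⇑σ) | g 1 0 = 0}, ∀ h ∈ {g ∈ SLstarSet (⇑σ) | g 1 0 = 0},
      g * h ∈ {g ∈ SLstarSet (⇑σ) | g 1 0 = 0}) ∧
    (∀ g ∈ {g ∈ SLstarSet (⇑σ) | g 1 0 = 0},
      ∃ g' ∈ {g ∈ SLstarSet (⇑σ) | g 1 0 = 0}, g * g' = 1 ∧ g' * g = 1) ∧
    (∀ g ∈ SLstarSet (⇑σ),
      g ∈ {g ∈ SLstarSet (⇑σ) | g 1 0 = 0} ∨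
      (∃ b₁ ∈ {g ∈ SLstarSet (⇑σ) | g 1 0 = 0}, ∃ b₂ ∈ {g ∈ SLstarSet (⇑σ) | g 1 0 = 0},
        g = b₁ * wM (TruncPoly k m) * b₂) ∨
      (∃ b₁ ∈ {g ∈ SLstarSet (⇑σ) | g 1 0 = 0}, ∃ b₂ ∈ {g ∈ SLstarSet (⇑σ) | g 1 0 = 0},
        ∃ b₃ ∈ {g ∈ SLstarSet (⇑σ) | g 1 0 = 0},
        g = b₁ * wM (TruncPoly k m) * b₂ * wM (TruncPoly k m) * b₃)) ∧
    (SLstarSet (⇑σ) ⊆ Submonoid.closure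
      ({g | ∃ s : TruncPoly k m, σ s = s ∧ g = uM s} ∪
       {g | ∃ t : (TruncPoly k m)ˣ, g = hM (σ : TruncPoly k m →* TruncPoly k m) t} ∪
       {wM (TruncPoly k m)})) :=
  SLstar_truncPoly_bruhat_decomposition_general hm σ hσ
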